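/- Curvature tensor identity implies sectional curvature formula: if R(x,y,z,u) = (τ/6)[2g(x,u)g(y,z) - 2g(x,z)g(y,u) + f(x,u)f(y,z) - f(x,z)f(y,u)] where f(x,y) = g(qx,y) + g(x,qy), then for any x with g(x,x) ≠ 0 and x, qx linearly independent, the sectional curvature μ(x,qx) = R(x,qx,x,qx)/(g(x,x)g(qx,qx) - g(x,qx)²) equals -(τ/6)·(g(x,x) - g(x,qx))/(g(x,x) + g(x,qx)). -/

import Mathlib

open Matrix

noncomputable def gmat (A B : ℝ) : Matrix (Fin 3) (Fin 3) ℝ := Matrix.of fun i j => if i = j then A else B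
noncomputable def qmat : Matrix (Fin 3) (Fin 3) ℝ := !![0,1,0; 0,0,1; 1,0,0]
noncomputable def fmat (A B : ℝ) : Matrix (Fin 3) (Fin 3) ℝ := Matrix.of fun i j => if i = j then 2*B else A + B
noncomputable def Jmat : Matrix (Fin 3) (Fin 3) ℝ := Matrix.of fun _ _ => 1
noncomputable def Phi : Matrix (Fin 3) (Fin 3) ℝ := Jmat - 1
noncomputable def Smat : Matrix (Fin 3) (Fin 3) ℝ := Jmat - 2 • (1 : Matrix (Fin 3) (Fin 3) ℝ)
noncomputable def gb (A B : ℝ) (u v : Fin 3 → ℝ) : ℝ := u ⬝ᵥ (gmat A B).mulVec v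
noncomputable def fb (A B : ℝ) (u v : Fin 3 → ℝ) : ℝ := gb A B (qmat.mulVec u) v + gb A B u (qmat.mulVec v)
noncomputable def Rt (A B τ : ℝ) (x y z u : Fin 3 → ℝ) : ℝ :=
  (τ/6) * (2 * gb A B x u * gb A B y z - 2 * gb A B x z * gb A B y u
    + fb A B x u * fb A B y z - fb A B x z * fb A B y u)


/-! Since `q` is a `g`-isometry with `q³ = 1`, every value of `g` and `f` on the pair `x, qx` is
expressed through `a = g(x,x)` and `b = g(x,qx)`: `f(x,x) = f(qx,qx) = 2b` and `f(x,qx) = a + b`.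
Hence `R(x,qx,x,qx) = (τ/6)(2b² - 2a² + (a+b)² - 4b²) = -(τ/6)(a-b)²`, while the denominator is
`a² - b² = (a-b)(a+b)`. -/

lemma gmat_transpose (A B : ℝ) : (gmat A B)ᵀ = gmat A B := by
  ext i j
  simp [gmat, eq_comm]

lemma qmat_transpose_mul_gmat_mul_qmat (A B : ℝ) : qmatᵀ * gmat A B * qmat = gmat A B := by
  ext i j
  fin_cases i <;> fin_cases j <;> simp [gmat, qmat, Matrix.mul_apply, Fin.sum_univ_three]

lemma qmat_mul_qmat_mul_qmat : qmat * qmat * qmat = 1 := by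
  ext i j
  fin_cases i <;> fin_cases j <;> simp [qmat, Matrix.mul_apply, Fin.sum_univ_three]

section Forms

variable (A B : ℝ)

lemma gb_comm (u v : Fin 3 → ℝ) : gb A B u v = gb A B v u := by
  rw [gb, gb, dotProduct_mulVec, ← mulVec_transpose, gmat_transpose, dotProduct_comm]

lemma gb_qmat_mulVec (u v : Fin 3 → ℝ) : gb A B (qmat *ᵥ u) (qmat *ᵥ v) = gb A B u v := by
  rw [gb, gb, mulVec_mulVec, dotProduct_mulVec, vecMul_mulVec, ← dotProduct_mulVec,
    ← Matrix.mul_assoc, qmat_transpose_mul_gmat_mul_qmat]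

lemma gb_qmat_mulVec_qmat_mulVec (u : Fin 3 → ℝ) :
    gb A B u (qmat *ᵥ qmat *ᵥ u) = gb A B (qmat *ᵥ u) u := by
  rw [← gb_qmat_mulVec, mulVec_mulVec, mulVec_mulVec, qmat_mul_qmat_mul_qmat, one_mulVec]

lemma fb_comm (u v : Fin 3 → ℝ) : fb A B u v = fb A B v u := by
  rw [fb, fb, gb_comm, gb_comm A B u]
  ring

lemma fb_self (u : Fin 3 → ℝ) : fb A B u u = 2 * gb A B u (qmat *ᵥ u) := by
  rw [fb, gb_comm]
  ring

lemma fb_qmat_mulVec_right (u : Fin 3 → ℝ) :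
    fb A B u (qmat *ᵥ u) = gb A B u u + gb A B u (qmat *ᵥ u) := by
  rw [fb, gb_qmat_mulVec, gb_qmat_mulVec_qmat_mulVec, gb_comm A B (qmat *ᵥ u)]

lemma Rt_qmat_mulVec (τ : ℝ) (x : Fin 3 → ℝ) :
    Rt A B τ x (qmat *ᵥ x) x (qmat *ᵥ x) = -(τ / 6) * (gb A B x x - gb A B x (qmat *ᵥ x)) ^ 2 := by
  rw [Rt, fb_comm A B (qmat *ᵥ x) x, fb_self, fb_self, fb_qmat_mulVec_right, gb_qmat_mulVec,
    gb_qmat_mulVec, gb_comm A B (qmat *ᵥ x) x]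
  ring

end Forms

lemma sub_sq_div_mul_self_sub_sq (a b : ℝ) :
    (a - b) ^ 2 / (a * a - b ^ 2) = (a - b) / (a + b) := by
  rcases eq_or_ne (a - b) 0 with h | h
  · simp [h]
  · rw [show a * a - b ^ 2 = (a - b) * (a + b) by ring, sq, mul_div_mul_left _ _ h]

theorem stmt16_general (A B τ : ℝ) (x : Fin 3 → ℝ) :
    Rt A B τ x (qmat.mulVec x) x (qmat.mulVec x) /
      (gb A B x x * gb A B (qmat.mulVec x) (qmat.mulVec x) - (gb A B x (qmat.mulVec x))^2)
    = -(τ/6) * (gb A B x x - gb A B x (qmat.mulVec x)) / (gb A B x x + gb A B x (qmat.mulVec x)) := by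
  rw [Rt_qmat_mulVec, gb_qmat_mulVec, mul_div_assoc, sub_sq_div_mul_self_sub_sq, mul_div_assoc]

theorem stmt16 (A B τ : ℝ) (hB : 0 < B) (hAB : B < A) (x : Fin 3 → ℝ)
    (hx : gb A B x x ≠ 0) (hli : LinearIndependent ℝ ![x, qmat.mulVec x]) :
    Rt A B τ x (qmat.mulVec x) x (qmat.mulVec x) /
      (gb A B x x * gb A B (qmat.mulVec x) (qmat.mulVec x) - (gb A B x (qmat.mulVec x))^2)
    = -(τ/6) * (gb A B x x - gb A B x (qmat.mulVec x)) / (gb A B x x + gb A B x (qmat.mulVec x)) :=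
  stmt16_general A B τ x
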